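/- Let K_y(t,s) = (D_y/(2a_y))e^{-a_y|t-s|}. Then for any n, any times t_1,…,t_n, and complex coefficients c_1,…,c_n, the matrix pair (α_{ij}, η_{ij}) with α_{ij} = κ·[i=j]·c + K_y(t_i,t_j) and η_{ij} = κ·[i=j]·c − K_y(t_i,t_j) (discretized with diagonal weight c > 0) satisfies the positivity condition Σ_{ij} (\bar c_i c_j α_{ij} + Re(c_i c_j η_{ij})) ≥ 0 required for (α, η) to be correlation functions of a complex Gaussian vector. -/

import Mathlib

open Complex MeasureTheory

/-- The `min` kernel is positive semidefinite (for nonnegative arguments). -/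
lemma min_kernel_psd (n : ℕ) (u y : Fin n → ℝ) (hu : ∀ i, 0 ≤ u i) :
    0 ≤ ∑ i : Fin n, ∑ j : Fin n, min (u i) (u j) * (y i * y j) := by
  set f : Fin n → ℝ → ℝ := fun i => Set.indicator (Set.Ioo 0 (u i)) (fun _ => y i) with hf
  have prodind : ∀ i j, (fun x => f i x * f j x)
      = Set.indicator (Set.Ioo 0 (min (u i) (u j))) (fun _ => y i * y j) := by
    intro i j
    funext x
    rw [hf]
    rw [← Set.inter_indicator_mul]
    congr 1
    rw [Set.Ioo_inter_Ioo, max_self]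
  have prodint : ∀ i j, Integrable (fun x => f i x * f j x) := by
    intro i j
    rw [prodind i j]
    rw [integrable_indicator_iff measurableSet_Ioo]
    exact integrableOn_const measure_Ioo_lt_top.ne
  have hij : ∀ i j, ∫ x, f i x * f j x = min (u i) (u j) * (y i * y j) := by
    intro i j
    rw [prodind i j]
    rw [MeasureTheory.integral_indicator_const _ measurableSet_Ioo]
    rw [measureReal_def, Real.volume_Ioo, sub_zero, smul_eq_mul]
    rw [ENNReal.toReal_ofReal (le_min (hu i) (hu j))]
  have key : ∑ i : Fin n, ∑ j : Fin n, min (u i) (u j) * (y i * y j)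
      = ∫ x, (∑ i : Fin n, f i x) ^ 2 := by
    have hsq : ∀ x : ℝ, (∑ i : Fin n, f i x) ^ 2 = ∑ i : Fin n, ∑ j : Fin n, f i x * f j x := by
      intro x; rw [sq, Finset.sum_mul_sum]
    simp_rw [hsq]
    rw [MeasureTheory.integral_finset_sum]
    · refine Finset.sum_congr rfl fun i _ => ?_
      rw [MeasureTheory.integral_finset_sum]
      · exact Finset.sum_congr rfl fun j _ => (hij i j).symm
      · intro j _; exact prodint i j
    · intro i _; exact MeasureTheory.integrable_finset_sum _ fun j _ => prodint i j
  rw [key]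
  exact integral_nonneg fun x => sq_nonneg _

/-- Discretized positivity of the pair `(α, η)` built from a diagonal (discretized δ) part
and the OU kernel `K_y(t,s) = (D_y/(2a_y)) e^{-a_y|t-s|}`:
`α_{ij} = κ c [i=j] + K_y(t_i,t_j)`, `η_{ij} = κ c [i=j] − K_y(t_i,t_j)` satisfy
`∑_{ij} (conj(c_i) c_j α_{ij} + Re(c_i c_j η_{ij})) ≥ 0`, the positivity condition required
for `(α, η)` to be correlation functions of a complex Gaussian vector. -/
theorem stmt_16 (κ c Dy ay : ℝ) (hκ : 0 < κ) (hc : 0 < c) (hDy : 0 < Dy) (hay : 0 < ay)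
    (Ky : ℝ → ℝ → ℝ) (hKy : ∀ t s, Ky t s = Dy / (2 * ay) * Real.exp (-ay * |t - s|))
    (n : ℕ) (t : Fin n → ℝ) (cv : Fin n → ℂ)
    (α η : Fin n → Fin n → ℝ)
    (hα : ∀ i j, α i j = κ * (if i = j then c else 0) + Ky (t i) (t j))
    (hη : ∀ i j, η i j = κ * (if i = j then c else 0) - Ky (t i) (t j)) :
    0 ≤ ∑ i, ∑ j,
      (((starRingEnd ℂ) (cv i) * cv j * (α i j : ℂ)).re + (cv i * cv j * (η i j : ℂ)).re) := by
  set u : Fin n → ℝ := fun i => Real.exp (2 * ay * t i) with hu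
  set y : Fin n → ℝ := fun i => (cv i).im * Real.exp (-ay * t i) with hy
  have hK : ∀ i j, Ky (t i) (t j)
      = Dy / (2 * ay) * (min (u i) (u j) * (Real.exp (-ay * t i) * Real.exp (-ay * t j))) := by
    intro i j
    rw [hKy, hu]
    rcases le_total (t i) (t j) with h | h
    · have h1 : |t i - t j| = t j - t i := by rw [abs_sub_comm, _root_.abs_of_nonneg (by linarith)]
      have h2 : min (Real.exp (2 * ay * t i)) (Real.exp (2 * ay * t j))
          = Real.exp (2 * ay * t i) :=
        min_eq_left (Real.exp_le_exp.2 (by nlinarith))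
      rw [h1, h2, ← Real.exp_add, ← Real.exp_add]
      congr 2
      ring
    · have h1 : |t i - t j| = t i - t j := _root_.abs_of_nonneg (by linarith)
      have h2 : min (Real.exp (2 * ay * t i)) (Real.exp (2 * ay * t j))
          = Real.exp (2 * ay * t j) :=
        min_eq_right (Real.exp_le_exp.2 (by nlinarith))
      rw [h1, h2, ← Real.exp_add, ← Real.exp_add]
      congr 2
      ring
  have hterm : ∀ i j, ((starRingEnd ℂ) (cv i) * cv j * (α i j : ℂ)).re
        + (cv i * cv j * (η i j : ℂ)).re
      = 2 * κ * (if i = j then c else 0) * ((cv i).re * (cv j).re)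
        + 2 * (Dy / (2 * ay)) * (min (u i) (u j) * (y i * y j)) := by
    intro i j
    rw [hα, hη, hK i j, hy]
    simp only [Complex.mul_re, Complex.mul_im, Complex.conj_re, Complex.conj_im,
      Complex.ofReal_re, Complex.ofReal_im]
    ring
  simp_rw [hterm]
  have split : ∀ i : Fin n, ∑ j : Fin n,
        (2 * κ * (if i = j then c else 0) * ((cv i).re * (cv j).re)
          + 2 * (Dy / (2 * ay)) * (min (u i) (u j) * (y i * y j)))
      = (∑ j : Fin n, 2 * κ * (if i = j then c else 0) * ((cv i).re * (cv j).re))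
        + ∑ j : Fin n, 2 * (Dy / (2 * ay)) * (min (u i) (u j) * (y i * y j)) := by
    intro i; rw [Finset.sum_add_distrib]
  simp_rw [split]
  rw [Finset.sum_add_distrib]
  apply add_nonneg
  · apply Finset.sum_nonneg
    intro i _
    apply Finset.sum_nonneg
    intro j _
    by_cases hij : i = j
    · subst hij
      rw [if_pos rfl]
      exact mul_nonneg (by positivity) (mul_self_nonneg _)
    · simp [hij]
  · simp_rw [← Finset.mul_sum]
    apply mul_nonneg (by positivity)
    exact min_kernel_psd n u y fun i => (Real.exp_pos _).le
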